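/- Consider the bracket on the polynomial ring C[x_{i,α}^j] (1 ≤ i,j,k ≤ N, 1 ≤ α,β ≤ m) defined on generators by {x_{i,α}^j, x_{i',β}^{j'}} = Σ_γ b_{αβ}^γ x_{i,γ}^{j'} δ_{i'}^j - Σ_γ b_{βα}^γ x_{i',γ}^j δ_i^{j'}, extended as a biderivation. This bracket is antisymmetric; and if b_{αβ}^μ b_{μγ}^σ = b_{αμ}^σ b_{βγ}^μ for all indices (associativity of the structure constants), then it satisfies the Jacobi identity, i.e. it is a Poisson bracket. -/
import Mathlib


open MvPolynomial BigOperators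

noncomputable section

set_option maxHeartbeats 800000 in
/-- The linear trace bracket on `ℂ[x_{i,α}^j]`: any bilinear biderivation with values on
generators `{x_{i,α}^j, x_{i',β}^{j'}} = Σ_γ b_{αβ}^γ x_{i,γ}^{j'} δ_{i'}^j
- Σ_γ b_{βα}^γ x_{i',γ}^j δ_i^{j'}` is antisymmetric; and if the structure constants are
associative, `b_{αβ}^μ b_{μγ}^σ = b_{αμ}^σ b_{βγ}^μ`, it satisfies the Jacobi identity,
hence is a Poisson bracket. -/
theorem linear_trace_bracket_is_poisson (N m : ℕ) (b : Fin m → Fin m → Fin m → ℂ)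
    (P : MvPolynomial (Fin N × Fin m × Fin N) ℂ →ₗ[ℂ]
          MvPolynomial (Fin N × Fin m × Fin N) ℂ →ₗ[ℂ]
          MvPolynomial (Fin N × Fin m × Fin N) ℂ)
    (hLeibR : ∀ f g h, P f (g * h) = g * P f h + P f g * h)
    (hLeibL : ∀ f g h, P (f * g) h = f * P g h + P f h * g)
    (hGen : ∀ (i j i' j' : Fin N) (α β : Fin m),
      P (X (i, α, j)) (X (i', β, j'))
        = (if i' = j then 1 else 0) * (∑ γ, C (b α β γ) * X (i, γ, j'))
          - (if i = j' then 1 else 0) * (∑ γ, C (b β α γ) * X (i', γ, j))) :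
    (∀ f g, P f g = - P g f) ∧
    ((∀ α β γ σ, ∑ μ, b α β μ * b μ γ σ = ∑ μ, b α μ σ * b β γ μ) →
      ∀ f g h, P f (P g h) + P g (P h f) + P h (P f g) = 0) := by
  classical
  -- basic consequences of the Leibniz rules
  have hPf1 : ∀ f, P f 1 = 0 := by
    intro f
    have h := hLeibR f 1 1
    simp only [mul_one, one_mul] at h
    exact (left_eq_add.mp h)
  have hP1f : ∀ f, P 1 f = 0 := by
    intro f
    have h := hLeibL 1 1 f
    simp only [mul_one, one_mul] at h
    exact (left_eq_add.mp h)
  have hPCr : ∀ f a, P f (C a) = 0 := by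
    intro f a
    have hca : (C a : MvPolynomial (Fin N × Fin m × Fin N) ℂ) = a • 1 := by
      rw [← MvPolynomial.algebraMap_eq, Algebra.algebraMap_eq_smul_one]
    rw [hca, map_smul, hPf1, smul_zero]
  have hPCl : ∀ a f, P (C a) f = 0 := by
    intro a f
    have hca : (C a : MvPolynomial (Fin N × Fin m × Fin N) ℂ) = a • 1 := by
      rw [← MvPolynomial.algebraMap_eq, Algebra.algebraMap_eq_smul_one]
    rw [hca, map_smul, LinearMap.smul_apply, hP1f, smul_zero]
  have hPmulC : ∀ (a : ℂ) f g, P f (C a * g) = C a * P f g := by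
    intro a f g
    rw [hLeibR, hPCr]; ring
  have hPdelta : ∀ (c : Prop) [Decidable c] (f g : MvPolynomial (Fin N × Fin m × Fin N) ℂ),
      P f ((if c then 1 else 0) * g) = (if c then 1 else 0) * P f g := by
    intro c _ f g
    split <;> simp
  -- antisymmetry
  have A1 : ∀ (v : Fin N × Fin m × Fin N) f, P f (X v) + P (X v) f = 0 := by
    intro v f
    induction f using MvPolynomial.induction_on with
    | C a => rw [hPCr, hPCl]; ring
    | add p q hp hq =>
      simp only [map_add, LinearMap.add_apply]
      calc P p (X v) + P q (X v) + (P (X v) p + P (X v) q)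
          = (P p (X v) + P (X v) p) + (P q (X v) + P (X v) q) := by ring
        _ = 0 := by rw [hp, hq]; ring
    | mul_X p n hp =>
      obtain ⟨i, α, j⟩ := n
      obtain ⟨i', β, j'⟩ := v
      rw [hLeibL, hLeibR]
      have hg : P (X (i, α, j)) (X (i', β, j')) + P (X (i', β, j')) (X (i, α, j)) = 0 := by
        rw [hGen, hGen]; ring
      calc p * P (X (i,α,j)) (X (i',β,j')) + P p (X (i',β,j')) * X (i,α,j)
            + (p * P (X (i',β,j')) (X (i,α,j)) + P (X (i',β,j')) p * X (i,α,j))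
          = p * (P (X (i,α,j)) (X (i',β,j')) + P (X (i',β,j')) (X (i,α,j)))
            + (P p (X (i',β,j')) + P (X (i',β,j')) p) * X (i,α,j) := by ring
        _ = 0 := by rw [hg, hp]; ring
  have A : ∀ g f, P f g + P g f = 0 := by
    intro g
    induction g using MvPolynomial.induction_on with
    | C a => intro f; rw [hPCr, hPCl]; ring
    | add p q hp hq =>
      intro f
      simp only [map_add, LinearMap.add_apply]
      calc P f p + P f q + (P p f + P q f)
          = (P f p + P p f) + (P f q + P q f) := by ring
        _ = 0 := by rw [hp f, hq f]; ring
    | mul_X p n hp =>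
      intro f
      rw [hLeibR, hLeibL]
      calc p * P f (X n) + P f p * X n + (p * P (X n) f + P p f * X n)
          = p * (P f (X n) + P (X n) f) + (P f p + P p f) * X n := by ring
        _ = 0 := by rw [A1, hp f]; ring
  refine ⟨fun f g => eq_neg_of_add_eq_zero_left (A g f), ?_⟩
  intro hassoc
  -- Jacobi identity on generators
  have h1 : ∀ (c : Fin m → ℂ) (d : Fin m → Fin m → ℂ) (v : Fin m → Fin N × Fin m × Fin N)
      (δ : MvPolynomial (Fin N × Fin m × Fin N) ℂ),
      ∑ μ, C (c μ) * (δ * ∑ σ, C (d μ σ) * X (v σ))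
        = δ * ∑ σ, C (∑ μ, c μ * d μ σ) * X (v σ) := by
    intro c d v δ
    calc ∑ μ, C (c μ) * (δ * ∑ σ, C (d μ σ) * X (v σ))
        = ∑ μ, ∑ σ, δ * (C (c μ) * C (d μ σ) * X (v σ)) := by
          refine Finset.sum_congr rfl fun μ _ => ?_
          rw [Finset.mul_sum, Finset.mul_sum]
          exact Finset.sum_congr rfl fun σ _ => by ring
      _ = ∑ σ, ∑ μ, δ * (C (c μ) * C (d μ σ) * X (v σ)) := Finset.sum_comm
      _ = δ * ∑ σ, C (∑ μ, c μ * d μ σ) * X (v σ) := by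
          rw [Finset.mul_sum]
          refine Finset.sum_congr rfl fun σ _ => ?_
          rw [map_sum, Finset.sum_mul, Finset.mul_sum]
          refine Finset.sum_congr rfl fun μ _ => ?_
          rw [C_mul]
  have rearr : ∀ (c : Fin m → ℂ) (d e : Fin m → Fin m → ℂ)
      (v w : Fin m → Fin N × Fin m × Fin N)
      (δ1 δ2 : MvPolynomial (Fin N × Fin m × Fin N) ℂ),
      ∑ μ, C (c μ) * (δ1 * (∑ σ, C (d μ σ) * X (v σ)) - δ2 * (∑ σ, C (e μ σ) * X (w σ)))
        = δ1 * (∑ σ, C (∑ μ, c μ * d μ σ) * X (v σ))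
          - δ2 * (∑ σ, C (∑ μ, c μ * e μ σ) * X (w σ)) := by
    intro c d e v w δ1 δ2
    simp only [mul_sub, Finset.sum_sub_distrib, h1]
  have expand : ∀ (i j i' j' i'' j'' : Fin N) (α β γ : Fin m),
      P (X (i,α,j)) (P (X (i',β,j')) (X (i'',γ,j''))) =
        (if i'' = j' then 1 else 0) * ((if i' = j then 1 else 0)
            * (∑ σ, C (∑ μ, b β γ μ * b α μ σ) * X (i,σ,j'')))
        - (if i'' = j' then 1 else 0) * ((if i = j'' then 1 else 0)
            * (∑ σ, C (∑ μ, b β γ μ * b μ α σ) * X (i',σ,j)))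
        - (if i' = j'' then 1 else 0) * ((if i'' = j then 1 else 0)
            * (∑ σ, C (∑ μ, b γ β μ * b α μ σ) * X (i,σ,j')))
        + (if i' = j'' then 1 else 0) * ((if i = j' then 1 else 0)
            * (∑ σ, C (∑ μ, b γ β μ * b μ α σ) * X (i'',σ,j))) := by
    intro i j i' j' i'' j'' α β γ
    rw [hGen i' j' i'' j'' β γ, map_sub]
    simp only [hPdelta, map_sum, hPmulC, hGen]
    rw [rearr, rearr]
    simp only [map_sum]
    ring
  have Jgen : ∀ x y z : Fin N × Fin m × Fin N,
      P (X x) (P (X y) (X z)) + P (X y) (P (X z) (X x)) + P (X z) (P (X x) (X y)) = 0 := by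
    rintro ⟨i,α,j⟩ ⟨i',β,j'⟩ ⟨i'',γ,j''⟩
    rw [expand, expand, expand]
    have hassoc' : ∀ α β γ σ, (∑ μ, b β γ μ * b α μ σ) = ∑ μ, b α β μ * b μ γ σ := by
      intro α β γ σ
      rw [hassoc α β γ σ]
      exact Finset.sum_congr rfl fun μ _ => mul_comm _ _
    simp only [hassoc']
    ring
  -- the Jacobiator vanishes on constants and is a derivation in the last slot
  have JC3 : ∀ f g (a : ℂ), P f (P g (C a)) + P g (P (C a) f) + P (C a) (P f g) = 0 := by
    intro f g a
    simp [hPCr, hPCl]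
  have Jmul3 : ∀ f g p q, P f (P g (p*q)) + P g (P (p*q) f) + P (p*q) (P f g)
      = p * (P f (P g q) + P g (P q f) + P q (P f g))
        + (P f (P g p) + P g (P p f) + P p (P f g)) * q := by
    intro f g p q
    rw [hLeibR g p q, hLeibL p q f, hLeibL p q (P f g)]
    rw [map_add, map_add]
    rw [hLeibR f p (P g q), hLeibR g p (P q f)]
    rw [hLeibR f (P g p) q, hLeibR g (P p f) q]
    linear_combination (P g p) * (A f q) + (P g q) * (A f p)
  have Jx : ∀ (x y : Fin N × Fin m × Fin N) (h : MvPolynomial (Fin N × Fin m × Fin N) ℂ),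
      P (X x) (P (X y) h) + P (X y) (P h (X x)) + P h (P (X x) (X y)) = 0 := by
    intro x y h
    induction h using MvPolynomial.induction_on with
    | C a => exact JC3 _ _ a
    | add p q hp hq =>
      simp only [map_add, LinearMap.add_apply]
      linear_combination hp + hq
    | mul_X p n hp =>
      linear_combination Jmul3 (X x) (X y) p (X n) + p * Jgen x y n + X n * hp
  have Jg : ∀ (x : Fin N × Fin m × Fin N) (g h : MvPolynomial (Fin N × Fin m × Fin N) ℂ),
      P (X x) (P g h) + P g (P h (X x)) + P h (P (X x) g) = 0 := by
    intro x g
    induction g using MvPolynomial.induction_on with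
    | C a => intro h; simp [hPCr, hPCl]
    | add p q hp hq =>
      intro h
      simp only [map_add, LinearMap.add_apply]
      linear_combination hp h + hq h
    | mul_X p n hp =>
      intro h
      linear_combination Jmul3 h (X x) p (X n) + p * Jx x n h + X n * hp h
  intro f g h
  induction f using MvPolynomial.induction_on with
  | C a => simp [hPCr, hPCl]
  | add p q hp hq =>
    simp only [map_add, LinearMap.add_apply]
    linear_combination hp + hq
  | mul_X p n hp =>
    linear_combination Jmul3 g h p (X n) + p * Jg n g h + X n * hp
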